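/- Let P ∈ ℂ(x) be nonzero, let c ∈ ℂ(x) be nonzero, and let α, β, γ, δ ∈ ℂ with αδ − βγ ≠ 0; set m = (αx + β)/(γx + δ) ∈ ℂ(x) and Q = c² · P(m) ∈ ℂ(x) (the result of substituting m for x in P, multiplied by c²). Suppose dj_P, dj_Q ∈ Aut_ℂ(K) fix x and satisfy dj_P(y) = P/y and dj_Q(y) = Q/y. Then dj_P and dj_Q are conjugate in Aut_ℂ(K). (Hence the conjugacy class of the de Jonquières involution dj_P depends only on the PGL(2)-orbit of P up to nonzero square factors, i.e. on the birational class of the hyperelliptic curve y² + P(x) = 0.) -/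

import Mathlib

/-- The field `K = ℂ(x, y)` of rational functions in two variables over `ℂ`, realized as the
fraction field of the polynomial ring `ℂ[x, y]`. Its group of `ℂ`-algebra automorphisms
`K ≃ₐ[ℂ] K` is the plane Cremona group `Cr(2)`. -/
noncomputable abbrev PlaneFunctionField : Type :=
  FractionRing (MvPolynomial (Fin 2) ℂ)

/-- The element `x` of `K = ℂ(x, y)`. -/
noncomputable def Xf : PlaneFunctionField :=
  algebraMap (MvPolynomial (Fin 2) ℂ) PlaneFunctionField (MvPolynomial.X 0)

/-- The element `y` of `K = ℂ(x, y)`. -/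
noncomputable def Yf : PlaneFunctionField :=
  algebraMap (MvPolynomial (Fin 2) ℂ) PlaneFunctionField (MvPolynomial.X 1)

/-- The image of a complex constant in `K = ℂ(x, y)`. -/
noncomputable def Cf (c : ℂ) : PlaneFunctionField :=
  algebraMap ℂ PlaneFunctionField c

/-- The subfield `ℂ(x)` of `K = ℂ(x, y)`. -/
noncomputable def Cx : IntermediateField ℂ PlaneFunctionField :=
  IntermediateField.adjoin ℂ {Xf}

/-!
Conjugating `dj_P` by the Möbius substitution `μ` gives `y ↦ μ(P)/y`, and conjugating that by the
rescaling `ρ : x ↦ x, y ↦ c⁻¹y` gives `y ↦ c²μ(P)/y`. The only real work is the existence of `ρ`: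
since `c⁻¹ ∈ ℂ(x)` is algebraic over `ℂ[x]` while `y` is transcendental over it, the pair
`x, c⁻¹y` is algebraically independent, and it generates `K`; so `K` is the rational function
field on either pair, which yields an automorphism taking one pair to the other.
-/

open IntermediateField

section Adjoin

variable {F L L' : Type*} [Field F] [Field L] [Algebra F L] [Field L'] [Algebra F L']

theorem AlgHom.eqOn_adjoin {s : Set L} {f g : L →ₐ[F] L'}
    (h : ∀ x ∈ s, f x = g x) {z : L} (hz : z ∈ adjoin F s) : f z = g z :=
  congrArg (fun φ : adjoin F s →ₐ[F] L' ↦ φ ⟨z, hz⟩)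
    (adjoin_algHom_ext F (φ₁ := f.comp (adjoin F s).val) (φ₂ := g.comp (adjoin F s).val) h)

theorem AlgEquiv.ext_of_adjoin_eq_top {s : Set L} (hs : adjoin F s = ⊤) {f g : L ≃ₐ[F] L'}
    (h : ∀ x ∈ s, f x = g x) : f = g :=
  AlgEquiv.ext fun _ ↦ AlgHom.eqOn_adjoin (f := f.toAlgHom) (g := g.toAlgHom) h (hs ▸ mem_top)

theorem isAlgebraic_algebraAdjoin_of_mem_adjoin {s : Set L} {z : L} (hz : z ∈ adjoin F s) :
    IsAlgebraic (Algebra.adjoin F s) z := by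
  induction hz using adjoin_induction with
  | mem x hx => exact isAlgebraic_algebraMap (⟨x, Algebra.subset_adjoin hx⟩ : Algebra.adjoin F s)
  | algebraMap r =>
    rw [IsScalarTower.algebraMap_apply F (Algebra.adjoin F s) L]
    exact isAlgebraic_algebraMap _
  | add x y _ _ hx hy => exact hx.add hy
  | inv x _ hx => exact hx.inv
  | mul x y _ _ hx hy => exact hx.mul hy

theorem Transcendental.mul_of_isAlgebraic {R : Type*} [CommRing R] [NoZeroDivisors R]
    [Algebra R L] {a z : L} (hz : Transcendental R z) (ha : IsAlgebraic R a) (ha0 : a ≠ 0) :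
    Transcendental R (a * z) :=
  fun h ↦ hz (ha.of_mul (mem_nonZeroDivisors_of_ne_zero ha0) h)

theorem algebraicIndependent_pair_iff {x v : L} :
    AlgebraicIndependent F ![x, v] ↔
      Transcendental F x ∧ Transcendental (Algebra.adjoin F {x}) v := by
  have : Subsingleton {j : Fin 2 // j ≠ 1} := ⟨by decide⟩
  have himage : ![x, v] '' {1}ᶜ = {x} := by
    ext; simp [Fin.exists_fin_two, eq_comm]
  rw [AlgebraicIndependent.iff_transcendental_adjoin_image 1,
    algebraicIndependent_singleton_iff (⟨0, by decide⟩ : {j : Fin 2 // j ≠ 1}), himage]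
  rfl

end Adjoin

section RationalFunctionField

variable {F L ι : Type*} [Field F] [Field L] [Algebra F L] {w : ι → L}

noncomputable def AlgebraicIndependent.fractionRingEquivOfAdjoinEqTop
    (hw : AlgebraicIndependent F w) (htop : adjoin F (Set.range w) = ⊤) :
    FractionRing (MvPolynomial ι F) ≃ₐ[F] L :=
  hw.aevalEquivField.trans ((equivOfEq htop).trans topEquiv)

theorem AlgebraicIndependent.fractionRingEquivOfAdjoinEqTop_algebraMap_X
    (hw : AlgebraicIndependent F w) (htop : adjoin F (Set.range w) = ⊤) (i : ι) :
    hw.fractionRingEquivOfAdjoinEqTop htop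
      (algebraMap (MvPolynomial ι F) _ (MvPolynomial.X i)) = w i := by
  simp only [fractionRingEquivOfAdjoinEqTop, AlgEquiv.trans_apply]
  exact (hw.aevalEquivField_algebraMap_apply_coe _).trans (MvPolynomial.aeval_X w i)

theorem AlgebraicIndependent.exists_algEquiv_apply_eq {w' : ι → L}
    (hw : AlgebraicIndependent F w) (htop : adjoin F (Set.range w) = ⊤)
    (hw' : AlgebraicIndependent F w') (htop' : adjoin F (Set.range w') = ⊤) :
    ∃ σ : L ≃ₐ[F] L, ∀ i, σ (w i) = w' i := by
  refine ⟨(hw.fractionRingEquivOfAdjoinEqTop htop).symm.trans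
    (hw'.fractionRingEquivOfAdjoinEqTop htop'), fun i ↦ ?_⟩
  rw [AlgEquiv.trans_apply, (AlgEquiv.symm_apply_eq _).2
    (hw.fractionRingEquivOfAdjoinEqTop_algebraMap_X htop i).symm,
    fractionRingEquivOfAdjoinEqTop_algebraMap_X]

end RationalFunctionField

local notation "K" => PlaneFunctionField

theorem Xf_mem_Cx : Xf ∈ Cx := mem_adjoin_simple_self ℂ Xf

theorem Yf_ne_zero : Yf ≠ 0 :=
  (map_ne_zero_iff _ (IsFractionRing.injective _ K)).2 (MvPolynomial.X_ne_zero 1)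

theorem algebraicIndependent_Xf_Yf : AlgebraicIndependent ℂ ![Xf, Yf] := by
  convert (MvPolynomial.algebraicIndependent_X (Fin 2) ℂ).map'
    (f := IsScalarTower.toAlgHom ℂ (MvPolynomial (Fin 2) ℂ) K) (IsFractionRing.injective _ _)
  ext i; fin_cases i <;> rfl

theorem eq_top_of_Xf_mem_of_Yf_mem {E : IntermediateField ℂ K} (hx : Xf ∈ E) (hy : Yf ∈ E) :
    E = ⊤ := by
  have hpoly (p : MvPolynomial (Fin 2) ℂ) : algebraMap _ K p ∈ E := by
    induction p using MvPolynomial.induction_on with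
    | C a => exact E.algebraMap_mem a
    | add p q hp hq => rw [map_add]; exact add_mem hp hq
    | mul_X p i hp =>
      rw [map_mul]
      fin_cases i
      exacts [mul_mem hp hx, mul_mem hp hy]
  refine eq_top_iff.2 fun z _ ↦ ?_
  obtain ⟨p, q, -, rfl⟩ := IsFractionRing.div_surjective (A := MvPolynomial (Fin 2) ℂ) z
  exact div_mem (hpoly p) (hpoly q)

theorem adjoin_Xf_Yf_eq_top : adjoin ℂ (Set.range ![Xf, Yf]) = ⊤ :=
  eq_top_of_Xf_mem_of_Yf_mem (subset_adjoin _ _ ⟨0, rfl⟩) (subset_adjoin _ _ ⟨1, rfl⟩)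

theorem adjoin_Xf_mul_Yf_eq_top {u : K} (hu : u ∈ Cx) (hu0 : u ≠ 0) :
    adjoin ℂ (Set.range ![Xf, u * Yf]) = ⊤ := by
  have hx : Xf ∈ adjoin ℂ (Set.range ![Xf, u * Yf]) := subset_adjoin _ _ ⟨0, rfl⟩
  have hu' : u ∈ adjoin ℂ (Set.range ![Xf, u * Yf]) := adjoin_simple_le_iff.2 hx hu
  refine eq_top_of_Xf_mem_of_Yf_mem hx ?_
  simpa [hu0] using mul_mem (inv_mem hu') (subset_adjoin ℂ _ ⟨1, rfl⟩)

theorem algebraicIndependent_Xf_mul_Yf {u : K} (hu : u ∈ Cx) (hu0 : u ≠ 0) :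
    AlgebraicIndependent ℂ ![Xf, u * Yf] := by
  obtain ⟨hx, hy⟩ := algebraicIndependent_pair_iff.1 algebraicIndependent_Xf_Yf
  exact algebraicIndependent_pair_iff.2
    ⟨hx, hy.mul_of_isAlgebraic (isAlgebraic_algebraAdjoin_of_mem_adjoin hu) hu0⟩

theorem exists_algEquiv_Xf_Yf_mul {u : K} (hu : u ∈ Cx) (hu0 : u ≠ 0) :
    ∃ ρ : K ≃ₐ[ℂ] K, ρ Xf = Xf ∧ ρ Yf = u * Yf := by
  obtain ⟨ρ, hρ⟩ := algebraicIndependent_Xf_Yf.exists_algEquiv_apply_eq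
    adjoin_Xf_Yf_eq_top
    (algebraicIndependent_Xf_mul_Yf hu hu0) (adjoin_Xf_mul_Yf_eq_top hu hu0)
  exact ⟨ρ, hρ 0, hρ 1⟩

theorem algEquiv_ext_Xf_Yf {f g : K ≃ₐ[ℂ] K} (hx : f Xf = g Xf) (hy : f Yf = g Yf) : f = g :=
  AlgEquiv.ext_of_adjoin_eq_top adjoin_Xf_Yf_eq_top (by simp [hx, hy])

theorem apply_eq_self_of_mem_Cx {f : K ≃ₐ[ℂ] K} (hf : f Xf = Xf) {z : K} (hz : z ∈ Cx) :
    f z = z :=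
  AlgHom.eqOn_adjoin (f := f.toAlgHom) (g := AlgHom.id ℂ K) (by simpa using hf) hz

theorem apply_mem_Cx {f : K ≃ₐ[ℂ] K} (hf : f Xf ∈ Cx) {z : K} (hz : z ∈ Cx) : f z ∈ Cx := by
  have hmap : Cx.map (f : K →ₐ[ℂ] K) ≤ Cx := by
    rw [Cx, adjoin_map, Set.image_singleton, adjoin_simple_le_iff]
    exact hf
  exact hmap ⟨z, hz, rfl⟩

theorem moebius_mem_Cx (α β γ δ : ℂ) : (Cf α * Xf + Cf β) / (Cf γ * Xf + Cf δ) ∈ Cx :=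
  div_mem (add_mem (mul_mem (Cx.algebraMap_mem α) Xf_mem_Cx) (Cx.algebraMap_mem β))
    (add_mem (mul_mem (Cx.algebraMap_mem γ) Xf_mem_Cx) (Cx.algebraMap_mem δ))

theorem deJonquieres_conjugacy_moebius_and_square_general
    (P c : PlaneFunctionField) (hP : P ∈ Cx)
    (hc : c ∈ Cx) (hc0 : c ≠ 0)
    (α β γ δ : ℂ)
    (μ : PlaneFunctionField ≃ₐ[ℂ] PlaneFunctionField)
    (hμx : μ Xf = (Cf α * Xf + Cf β) / (Cf γ * Xf + Cf δ))
    (hμy : μ Yf = Yf)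
    (djP djQ : PlaneFunctionField ≃ₐ[ℂ] PlaneFunctionField)
    (hdjPx : djP Xf = Xf) (hdjQx : djQ Xf = Xf)
    (hdjPy : djP Yf = P / Yf)
    (hdjQy : djQ Yf = (c ^ 2 * μ P) / Yf) :
    ∃ σ : PlaneFunctionField ≃ₐ[ℂ] PlaneFunctionField, σ * djP * σ⁻¹ = djQ := by
  obtain ⟨ρ, hρx, hρy⟩ := exists_algEquiv_Xf_Yf_mul (inv_mem hc) (inv_ne_zero hc0)
  have hμx_mem : μ Xf ∈ Cx := hμx ▸ moebius_mem_Cx α β γ δ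
  have hμP_mem : μ P ∈ Cx := apply_mem_Cx hμx_mem hP
  refine ⟨ρ * μ, mul_inv_eq_iff_eq_mul.2 (algEquiv_ext_Xf_Yf ?_ ?_)⟩
  · simp only [AlgEquiv.mul_apply, hdjPx, apply_eq_self_of_mem_Cx hρx hμx_mem,
      apply_eq_self_of_mem_Cx hdjQx hμx_mem]
  · simp only [AlgEquiv.mul_apply, hdjPy, map_div₀, hμy, hρy, map_mul, hdjQy,
      apply_eq_self_of_mem_Cx hρx hμP_mem, apply_eq_self_of_mem_Cx hdjQx (inv_mem hc)]
    field_simp [Yf_ne_zero]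

/-- Let `P ∈ ℂ(x)` be nonzero, `c ∈ ℂ(x)` nonzero, and `m = (αx + β)/(γx + δ)` a Möbius
transformation (`αδ − βγ ≠ 0`); set `Q = c²·P(m)`, where the substitution `x ↦ m` is
realized by the automorphism `μ : x ↦ m, y ↦ y` of `K`. Then the de Jonquières involutions
`dj_P : y ↦ P/y` and `dj_Q : y ↦ Q/y` are conjugate in the Cremona group: the conjugacy
class of `dj_P` depends only on the `PGL(2)`-orbit of `P` up to nonzero square factors,
i.e. on the birational class of the hyperelliptic curve `y² + P(x) = 0`. -/
theorem deJonquieres_conjugacy_moebius_and_square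
    (P c : PlaneFunctionField) (hP : P ∈ Cx) (hP0 : P ≠ 0)
    (hc : c ∈ Cx) (hc0 : c ≠ 0)
    (α β γ δ : ℂ) (hdet : α * δ - β * γ ≠ 0)
    (μ : PlaneFunctionField ≃ₐ[ℂ] PlaneFunctionField)
    (hμx : μ Xf = (Cf α * Xf + Cf β) / (Cf γ * Xf + Cf δ))
    (hμy : μ Yf = Yf)
    (djP djQ : PlaneFunctionField ≃ₐ[ℂ] PlaneFunctionField)
    (hdjPx : djP Xf = Xf) (hdjQx : djQ Xf = Xf)
    (hdjPy : djP Yf = P / Yf)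
    (hdjQy : djQ Yf = (c ^ 2 * μ P) / Yf) :
    ∃ σ : PlaneFunctionField ≃ₐ[ℂ] PlaneFunctionField, σ * djP * σ⁻¹ = djQ :=
  deJonquieres_conjugacy_moebius_and_square_general P c hP hc hc0 α β γ δ μ hμx hμy djP djQ hdjPx
    hdjQx hdjPy hdjQy
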